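/- Let O be an attribute hiding scheme and b ∈ O. Suppose there exists a tree partition P of b with 2(b) < ∑_{c ∈ P} 2(c) (selling b as one bundle is strictly worse than some recursive splitting of b). Then there exists an attribute hiding scheme O' with b ∉ O' and ∑_{c ∈ O'} r(c) ≥ ∑_{c ∈ O} r(c). (Hence such a bundle b can be safely excluded when searching for an optimal scheme.) -/
import Mathlib


/-- A natural bundle: each attribute either takes a specific value (`some a`) or is
hidden (`none`). -/
abbrev Bundle (k : ℕ) (C : Fin k → ℕ) := ∀ i : Fin k, Option (Fin (C i))

/-- The set of instantiations belonging to a natural bundle. -/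
def members {k : ℕ} {C : Fin k → ℕ} (b : Bundle k C) : Finset (∀ i : Fin k, Fin (C i)) :=
  Finset.univ.filter fun ω => ∀ i, b i = none ∨ b i = some (ω i)

/-- An attribute hiding scheme: a finite set of natural bundles with pairwise disjoint
member sets. -/
def IsScheme {k : ℕ} {C : Fin k → ℕ} (O : Finset (Bundle k C)) : Prop :=
  ∀ b ∈ O, ∀ b' ∈ O, b ≠ b' → Disjoint (members b) (members b')

/-- `splitB b x` : the bundles obtained from `b` by revealing the hidden attribute `x`. -/
def splitB {k : ℕ} {C : Fin k → ℕ} (b : Bundle k C) (x : Fin k) : Finset (Bundle k C) :=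
  Finset.univ.image fun j : Fin (C x) => Function.update b x (some j)

/-- Tree partitions of a natural bundle `b`: obtained from `{b}` by recursively
splitting a bundle along one of its hidden attributes. -/
inductive IsTreePartition (k : ℕ) (C : Fin k → ℕ) (b : Bundle k C) :
    Finset (Bundle k C) → Prop
  | base : IsTreePartition k C b {b}
  | step (P : Finset (Bundle k C)) (c : Bundle k C) (x : Fin k) :
      IsTreePartition k C b P → c ∈ P → c x = none →
      IsTreePartition k C b ((P.erase c) ∪ splitB c x)

/-- The pairs of distinct bidders. -/
def pairs (n : ℕ) : Finset (Fin n × Fin n) := Finset.univ.filter fun p => p.1 ≠ p.2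

theorem pairs_nonempty {n : ℕ} (hn : 2 ≤ n) : (pairs n).Nonempty := by
  refine ⟨(⟨0, by omega⟩, ⟨1, by omega⟩), ?_⟩
  simp only [pairs, Finset.mem_filter, Finset.mem_univ, true_and]
  intro h
  simpa using congrArg Fin.val h

/-- The second price of a bundle of instantiations: the max over pairs of distinct
bidders of the min of the two bidders' (additive) values for the bundle. -/
noncomputable def sp {n : ℕ} (hn : 2 ≤ n) {Ω : Type*} (v : Fin n → Ω → ℝ) (B : Finset Ω) : ℝ :=
  (pairs n).sup' (pairs_nonempty hn) fun p => min (∑ ω ∈ B, v p.1 ω) (∑ ω ∈ B, v p.2 ω)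

/-- The unit bundle of an instantiation `ω`: no attribute is hidden. -/
def unitB {k : ℕ} {C : Fin k → ℕ} (ω : ∀ i : Fin k, Fin (C i)) : Bundle k C :=
  fun i => some (ω i)

/-- The marginal revenue `r b`: the extra revenue obtained by selling `b` as a bundle
rather than selling its instantiations separately. -/
noncomputable def rMarg {k : ℕ} {C : Fin k → ℕ} {n : ℕ} (hn : 2 ≤ n)
    (v : Fin n → (∀ i : Fin k, Fin (C i)) → ℝ) (b : Bundle k C) : ℝ :=
  sp hn v (members b) - ∑ ω ∈ members b, sp hn v (members (unitB ω))

section Aux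

variable {k : ℕ} {C : Fin k → ℕ}

lemma mem_members' {b : Bundle k C} {ω : ∀ i : Fin k, Fin (C i)} :
    ω ∈ members b ↔ ∀ i, b i = none ∨ b i = some (ω i) := by
  simp [members]

/-- `d` refines `c` : wherever `c` reveals a value, `d` reveals the same value. -/
def Refines (d c : Bundle k C) : Prop := ∀ i a, c i = some a → d i = some a

lemma members_subset_of_refines {d c : Bundle k C} (h : Refines d c) :
    members d ⊆ members c := by
  intro ω hω
  rw [mem_members'] at hω ⊢
  intro i
  rcases hω i with h1 | h1
  · rcases hc : c i with _ | a
    · exact Or.inl rfl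
    · exact absurd (h i a hc) (by simp [h1])
  · rcases hc : c i with _ | a
    · exact Or.inl rfl
    · right; exact (h i a hc).symm.trans h1

lemma members_nonempty (hC : ∀ i, 1 ≤ C i) (b : Bundle k C) : (members b).Nonempty := by
  refine ⟨fun i => (b i).getD ⟨0, hC i⟩, ?_⟩
  rw [mem_members']
  intro i
  cases h : b i with
  | none => exact Or.inl rfl
  | some a => right; simp [h]

lemma mem_members_update {c : Bundle k C} {x : Fin k} (hx : c x = none)
    (j : Fin (C x)) (ω : ∀ i : Fin k, Fin (C i)) :
    ω ∈ members (Function.update c x (some j)) ↔ ω ∈ members c ∧ ω x = j := by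
  rw [mem_members', mem_members']
  constructor
  · intro h
    constructor
    · intro i
      rcases h i with h1 | h1
      · by_cases hix : i = x
        · subst hix; exact Or.inl hx
        · rw [Function.update_of_ne hix] at h1; exact Or.inl h1
      · by_cases hix : i = x
        · subst hix; exact Or.inl hx
        · rw [Function.update_of_ne hix] at h1; exact Or.inr h1
    · have := h x
      rw [Function.update_self] at this
      rcases this with h1 | h1
      · exact absurd h1 (by simp)
      · exact (Option.some_injective _ h1).symm
  · rintro ⟨h, hωx⟩ i
    by_cases hix : i = x
    · subst hix; right; rw [Function.update_self, hωx]
    · rw [Function.update_of_ne hix]; exact h i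

lemma update_refines {c : Bundle k C} {x : Fin k} (hx : c x = none) (j : Fin (C x)) :
    Refines (Function.update c x (some j)) c := by
  intro i a hi
  by_cases hix : i = x
  · subst hix; rw [hx] at hi; exact absurd hi (by simp)
  · rw [Function.update_of_ne hix]; exact hi

lemma members_splitB_eq {c : Bundle k C} {x : Fin k} (hx : c x = none) :
    members c = (splitB c x).biUnion members := by
  ext ω
  simp only [Finset.mem_biUnion, splitB, Finset.mem_image, Finset.mem_univ, true_and]
  constructor
  · intro h
    exact ⟨Function.update c x (some (ω x)), ⟨ω x, rfl⟩,
      (mem_members_update hx (ω x) ω).2 ⟨h, rfl⟩⟩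
  · rintro ⟨d, ⟨j, rfl⟩, hd⟩
    exact ((mem_members_update hx j ω).1 hd).1

/-- Key invariants of tree partitions. -/
lemma tree_partition_inv {b : Bundle k C} {P : Finset (Bundle k C)}
    (hP : IsTreePartition k C b P) :
    (∀ c ∈ P, Refines c b) ∧
    (∀ c ∈ P, ∀ c' ∈ P, c ≠ c' → Disjoint (members c) (members c')) ∧
    members b = P.biUnion members ∧
    (b ∈ P → P = {b}) := by
  induction hP with
  | base =>
    refine ⟨?_, ?_, ?_, fun _ => rfl⟩
    · intro c hc; rw [Finset.mem_singleton] at hc; subst hc; exact fun i a h => h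
    · intro c hc c' hc' hne
      rw [Finset.mem_singleton] at hc hc'; subst hc; subst hc'; exact absurd rfl hne
    · simp
  | step P c x hPP hc hx ih =>
    obtain ⟨h1, h2, h3, h4⟩ := ih
    have hrefc : ∀ d ∈ splitB c x, Refines d c := by
      intro d hd
      simp only [splitB, Finset.mem_image, Finset.mem_univ, true_and] at hd
      obtain ⟨j, rfl⟩ := hd
      exact update_refines hx j
    have hsubc : ∀ d ∈ splitB c x, members d ⊆ members c := fun d hd =>
      members_subset_of_refines (hrefc d hd)
    refine ⟨?_, ?_, ?_, ?_⟩
    · intro d hd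
      rcases Finset.mem_union.1 hd with hd | hd
      · exact h1 d (Finset.mem_of_mem_erase hd)
      · intro i a hi
        exact hrefc d hd i a (h1 c hc i a hi)
    · intro d hd d' hd' hne
      rcases Finset.mem_union.1 hd with hd | hd <;> rcases Finset.mem_union.1 hd' with hd' | hd'
      · exact h2 d (Finset.mem_of_mem_erase hd) d' (Finset.mem_of_mem_erase hd') hne
      · exact Disjoint.mono_right (hsubc d' hd')
          (h2 d (Finset.mem_of_mem_erase hd) c hc (Finset.ne_of_mem_erase hd))
      · exact Disjoint.mono_left (hsubc d hd)
          (h2 c hc d' (Finset.mem_of_mem_erase hd') (Finset.ne_of_mem_erase hd').symm)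
      · simp only [splitB, Finset.mem_image, Finset.mem_univ, true_and] at hd hd'
        obtain ⟨j, rfl⟩ := hd
        obtain ⟨j', rfl⟩ := hd'
        have hjj : j ≠ j' := by
          intro h; exact hne (by rw [h])
        rw [Finset.disjoint_left]
        intro ω hω hω'
        rw [mem_members_update hx] at hω hω'
        exact hjj (hω.2.symm.trans hω'.2)
    · ext ω
      rw [h3]
      simp only [Finset.mem_biUnion, Finset.mem_union, Finset.mem_erase]
      constructor
      · rintro ⟨d, hd, hω⟩
        by_cases hdc : d = c
        · subst hdc
          rw [members_splitB_eq hx, Finset.mem_biUnion] at hω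
          obtain ⟨e, he, hω⟩ := hω
          exact ⟨e, Or.inr he, hω⟩
        · exact ⟨d, Or.inl ⟨hdc, hd⟩, hω⟩
      · rintro ⟨d, hd | hd, hω⟩
        · exact ⟨d, hd.2, hω⟩
        · exact ⟨c, hc, members_splitB_eq hx ▸ Finset.mem_biUnion.2 ⟨d, hd, hω⟩⟩
    · intro hbQ
      rcases Finset.mem_union.1 hbQ with hbe | hbs
      · have hPb := h4 (Finset.mem_of_mem_erase hbe)
        rw [hPb] at hbe
        have : c = b := Finset.mem_singleton.1 (hPb ▸ hc)
        subst this
        simp at hbe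
      · simp only [splitB, Finset.mem_image, Finset.mem_univ, true_and] at hbs
        obtain ⟨j, hj⟩ := hbs
        have hbx : b x = some j := by rw [← hj, Function.update_self]
        have := h1 c hc x j hbx
        rw [hx] at this
        exact absurd this (by simp)

end Aux

/-- If selling `b ∈ O` as a single bundle is strictly worse than selling it according to
some recursive splitting of `b`, then there is a scheme avoiding `b` whose total marginal
revenue is at least that of `O`; hence `b` can be safely excluded. -/
theorem stmt12 (k : ℕ) (C : Fin k → ℕ) (hC : ∀ i, 1 ≤ C i)
    (n : ℕ) (hn : 2 ≤ n) (v : Fin n → (∀ i : Fin k, Fin (C i)) → ℝ)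
    (O : Finset (Bundle k C)) (hO : IsScheme O) (b : Bundle k C) (hb : b ∈ O)
    (P : Finset (Bundle k C)) (hP : IsTreePartition k C b P)
    (hlt : sp hn v (members b) < ∑ c ∈ P, sp hn v (members c)) :
    ∃ O' : Finset (Bundle k C), IsScheme O' ∧ b ∉ O' ∧
      ∑ c ∈ O, rMarg hn v c ≤ ∑ c ∈ O', rMarg hn v c := by
  obtain ⟨h1, h2, h3, h4⟩ := tree_partition_inv hP
  -- b is not in P
  have hbP : b ∉ P := by
    intro hbP
    rw [h4 hbP, Finset.sum_singleton] at hlt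
    exact lt_irrefl _ hlt
  -- members of P-elements are subsets of members b
  have hsub : ∀ c ∈ P, members c ⊆ members b := fun c hc =>
    members_subset_of_refines (h1 c hc)
  -- P is disjoint from O.erase b
  have hdisjOP : Disjoint (O.erase b) P := by
    rw [Finset.disjoint_left]
    intro c hcO hcP
    have hdisj : Disjoint (members c) (members b) :=
      hO c (Finset.mem_of_mem_erase hcO) b hb (Finset.ne_of_mem_erase hcO)
    obtain ⟨ω, hω⟩ := members_nonempty hC c
    exact Finset.disjoint_left.1 hdisj hω (hsub c hcP hω)
  refine ⟨(O.erase b) ∪ P, ?_, ?_, ?_⟩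
  · -- scheme
    intro c hc c' hc' hne
    rcases Finset.mem_union.1 hc with hc | hc <;> rcases Finset.mem_union.1 hc' with hc' | hc'
    · exact hO c (Finset.mem_of_mem_erase hc) c' (Finset.mem_of_mem_erase hc') hne
    · exact Disjoint.mono_right (hsub c' hc')
        (hO c (Finset.mem_of_mem_erase hc) b hb (Finset.ne_of_mem_erase hc))
    · exact Disjoint.mono_left (hsub c hc)
        (hO b hb c' (Finset.mem_of_mem_erase hc') (Finset.ne_of_mem_erase hc').symm)
    · exact h2 c hc c' hc' hne
  · -- b not in O'
    intro hbO'
    rcases Finset.mem_union.1 hbO' with h | h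
    · exact (Finset.ne_of_mem_erase h) rfl
    · exact hbP h
  · -- sum inequality
    rw [Finset.sum_union hdisjOP]
    have hO_split : ∑ c ∈ O, rMarg hn v c = rMarg hn v b + ∑ c ∈ O.erase b, rMarg hn v c :=
      (Finset.add_sum_erase _ _ hb).symm
    rw [hO_split]
    have key : rMarg hn v b ≤ ∑ c ∈ P, rMarg hn v c := by
      have hpd : (↑P : Set (Bundle k C)).PairwiseDisjoint members := by
        intro c hc c' hc' hne
        exact h2 c hc c' hc' hne
      have hsum2 : ∑ ω ∈ members b, sp hn v (members (unitB ω)) =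
          ∑ c ∈ P, ∑ ω ∈ members c, sp hn v (members (unitB ω)) := by
        rw [h3, Finset.sum_biUnion hpd]
      unfold rMarg
      rw [Finset.sum_sub_distrib, hsum2]
      exact sub_le_sub_right hlt.le _
    linarith
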